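/- For interval-posets, the joint distribution of the statistics (trees, ir) is symmetric: for all n, a, b, the number of interval-posets of size n with trees(I) = a and ir(I) = b equals the number with trees(I) = b and ir(I) = a. -/

import Mathlib

/-- An interval-poset: a partial order on `{1,…,n}` such that for `a < b < c`,
`a ≺ c` implies `b ≺ c` and `c ≺ a` implies `b ≺ a`. -/
structure IPoset where
  n : ℕ
  rel : ℕ → ℕ → Prop
  supp : ∀ ⦃a b⦄, rel a b → 1 ≤ a ∧ a ≤ n ∧ 1 ≤ b ∧ b ≤ n
  refl : ∀ a, 1 ≤ a → a ≤ n → rel a a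
  antisymm : ∀ ⦃a b⦄, rel a b → rel b a → a = b
  trans : ∀ ⦃a b c⦄, rel a b → rel b c → rel a c
  inc : ∀ ⦃a b c⦄, a < b → b < c → rel a c → rel b c
  dec : ∀ ⦃a b c⦄, a < b → b < c → rel c a → rel b a

open scoped Classical in
/-- The initial rise `ir I`: the largest `k ≤ n` such that no relation
`i-1 ≺ i` holds for `2 ≤ i ≤ k`. -/
noncomputable def ir (I : IPoset) : ℕ :=
  Nat.findGreatest (fun k => ∀ i, 2 ≤ i → i ≤ k → ¬ I.rel (i - 1) i) I.n

/-- `x` is a root of the final forest (the forest of decreasing relations) of `I`. -/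
def IsDecRoot (I : IPoset) (x : ℕ) : Prop :=
  1 ≤ x ∧ x ≤ I.n ∧ ∀ y, y < x → ¬ I.rel x y

/-- `trees I`: the number of connected components of the final forest of `I`,
i.e. the number of its roots. -/
noncomputable def trees (I : IPoset) : ℕ := Set.ncard {x | IsDecRoot I x}

/-- The relation of the lower-contacts composition `LC(I₁, I₂, r)`: shifted
concatenation of `I₁`, a new vertex `k = n₁ + 1`, and `I₂`, where every vertex
of `I₁` precedes `k` and the vertices below one of the `r` smallest roots of
the final forest of `I₂` precede `k`. -/
def LCrel (I1 I2 : IPoset) (r : ℕ) : ℕ → ℕ → Prop := fun x y =>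
  let k := I1.n + 1
  (x ≤ I1.n ∧ y ≤ I1.n ∧ I1.rel x y) ∨
  (k < x ∧ k < y ∧ I2.rel (x - k) (y - k)) ∨
  (x = k ∧ y = k) ∨
  (y = k ∧ 1 ≤ x ∧ x ≤ I1.n) ∨
  (y = k ∧ k < x ∧ x ≤ k + I2.n ∧
    ∃ s, IsDecRoot I2 s ∧ Set.ncard {z | IsDecRoot I2 z ∧ z ≤ s} ≤ r ∧
      (x - k = s ∨ (s < x - k ∧ I2.rel (x - k) s)))

/-!
Every nonempty interval-poset decomposes uniquely in two ways. As `riseComp I₁ I₂ r` (a new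
first vertex, then `I₁`, then `I₂`, with the first `r` trees of the final forest of `I₁` below
the new vertex) it has `trees = (trees I₁ - r) + trees I₂ + 1` and `ir = ir I₁ + 1`. As the
lower-contacts composition `lcComp I₁ I₂ r` it has `trees = trees I₁ + (trees I₂ - r) + 1`, and
its number `itrees` of trees of the initial forest is `itrees I₂ + 1`. The splitting vertex is
the least vertex `≥ 2`, resp. the largest vertex, that all smaller vertices precede.

Trading one decomposition for the other recursively,
`toLC (riseComp I₁ I₂ r) = lcComp (toLC I₂) (toLC I₁) r`, gives a size-preserving bijection
with `trees (toLC I) = trees I` and `itrees (toLC I) = ir I`, inverted by `ofLC`. The mirror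
image `i ↦ n + 1 - i` exchanges `trees` and `itrees`, so `ofLC ∘ mirror ∘ toLC` is an
involution exchanging `trees` and `ir`.
-/

open scoped Classical
open Finset

theorem Finset.card_filter_Icc_one_add (p : ℕ → Prop) [DecidablePred p] (a b : ℕ) :
    #{x ∈ Icc 1 (a + b) | p x} = #{x ∈ Icc 1 a | p x} + #{x ∈ Icc 1 b | p (x + a)} := by
  have hsplit : Icc 1 (a + b) = Icc 1 a ∪ (Icc 1 b).map (addRightEmbedding a) := by
    ext x; simp only [mem_union, mem_Icc, mem_map, addRightEmbedding_apply]
    constructor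
    · intro hx
      by_cases hxa : x ≤ a
      · exact Or.inl ⟨hx.1, hxa⟩
      · exact Or.inr ⟨x - a, by omega, by omega⟩
    · rintro (hx | ⟨y, hy, rfl⟩) <;> omega
  rw [hsplit, filter_union, card_union_of_disjoint, filter_map, card_map]
  · rfl
  · refine disjoint_filter_filter (disjoint_left.2 fun x hx hx' => ?_)
    simp only [mem_Icc, mem_map, addRightEmbedding_apply] at hx hx'
    omega

theorem Finset.card_filter_card_filter_le_le {α : Type*} [LinearOrder α] (R : Finset α) {r : ℕ}
    (hr : r ≤ #R) : #{s ∈ R | #{z ∈ R | z ≤ s} ≤ r} = r := by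
  induction R using Finset.induction_on_max generalizing r with
  | empty => simp_all
  | insert a R ha ih =>
    have haR : a ∉ R := fun h => lt_irrefl a (ha a h)
    rw [card_insert_of_notMem haR] at hr
    rcases hr.lt_or_eq with hr | rfl
    · have hbelow : ∀ s ∈ R, {z ∈ insert a R | z ≤ s} = {z ∈ R | z ≤ s} := fun s hs => by
        rw [filter_insert, if_neg (ha s hs).not_ge]
      have htop : ¬ #{z ∈ insert a R | z ≤ a} ≤ r := by
        rw [filter_true_of_mem fun z hz => ?_, card_insert_of_notMem haR]
        · omega
        · rcases mem_insert.1 hz with rfl | hz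
          exacts [le_rfl, (ha z hz).le]
      rw [filter_insert, if_neg htop, filter_congr fun s hs => by rw [hbelow s hs]]
      exact ih (by omega)
    · rw [filter_true_of_mem fun s _ => ?_, card_insert_of_notMem haR]
      exact (card_filter_le _ _).trans (card_insert_le a R)

theorem Finset.mem_iff_card_filter_le_le_card {α : Type*} [LinearOrder α] {A R : Finset α}
    (hAR : A ⊆ R) (hA : ∀ s ∈ R, ∀ t ∈ A, s ≤ t → s ∈ A) {s : α} (hs : s ∈ R) :
    s ∈ A ↔ #{z ∈ R | z ≤ s} ≤ #A := by
  constructor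
  · intro hsA
    exact card_le_card fun z hz => (mem_filter.1 hz).elim fun hzR hzs => hA z hzR s hsA hzs
  · intro hcard
    by_contra hsA
    have hsub : A ⊆ {z ∈ R | z ≤ s}.erase s := fun t ht => by
      have hts : t < s := lt_of_not_ge fun hst => hsA (hA s hs t ht hst)
      exact mem_erase.2 ⟨hts.ne, mem_filter.2 ⟨hAR ht, hts.le⟩⟩
    have hsF : s ∈ {z ∈ R | z ≤ s} := mem_filter.2 ⟨hs, le_rfl⟩
    have := card_le_card hsub
    rw [card_erase_of_mem hsF] at this
    have := card_pos.2 ⟨s, hsF⟩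
    omega

namespace IPoset

theorem ext_of_rel_iff {I J : IPoset} (hn : I.n = J.n) (h : ∀ x y, I.rel x y ↔ J.rel x y) :
    I = J := by
  cases I; cases J
  subst hn
  congr
  funext x y
  exact propext (h x y)

section
variable (I : IPoset)

def restrict (o len : ℕ) : IPoset where
  n := min len (I.n - o)
  rel a b := 1 ≤ a ∧ a ≤ len ∧ 1 ≤ b ∧ b ≤ len ∧ I.rel (a + o) (b + o)
  supp a b h := by have := I.supp h.2.2.2.2; omega
  refl a h1 h2 := ⟨h1, by omega, h1, by omega, I.refl _ (by omega) (by omega)⟩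
  antisymm a b h h' := by have := I.antisymm h.2.2.2.2 h'.2.2.2.2; omega
  trans a b c h h' := ⟨h.1, h.2.1, h'.2.2.1, h'.2.2.2.1, I.trans h.2.2.2.2 h'.2.2.2.2⟩
  inc a b c hab hbc h :=
    ⟨by omega, by omega, h.2.2.1, h.2.2.2.1, I.inc (by omega) (by omega) h.2.2.2.2⟩
  dec a b c hab hbc h :=
    ⟨by omega, by omega, h.2.2.1, h.2.2.2.1, I.dec (by omega) (by omega) h.2.2.2.2⟩

theorem restrict_n {o len : ℕ} (h : o + len ≤ I.n) : (I.restrict o len).n = len := by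
  simp only [restrict]; omega

def mirror : IPoset where
  n := I.n
  rel x y := 1 ≤ x ∧ x ≤ I.n ∧ 1 ≤ y ∧ y ≤ I.n ∧ I.rel (I.n + 1 - x) (I.n + 1 - y)
  supp a b h := ⟨h.1, h.2.1, h.2.2.1, h.2.2.2.1⟩
  refl a h1 h2 := ⟨h1, h2, h1, h2, I.refl _ (by omega) (by omega)⟩
  antisymm a b h h' := by have := I.antisymm h.2.2.2.2 h'.2.2.2.2; omega
  trans a b c h h' := ⟨h.1, h.2.1, h'.2.2.1, h'.2.2.2.1, I.trans h.2.2.2.2 h'.2.2.2.2⟩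
  inc a b c hab hbc h :=
    ⟨by omega, by omega, h.2.2.1, h.2.2.2.1, I.dec (by omega) (by omega) h.2.2.2.2⟩
  dec a b c hab hbc h :=
    ⟨by omega, by omega, h.2.2.1, h.2.2.2.1, I.inc (by omega) (by omega) h.2.2.2.2⟩

@[simp] theorem mirror_n : I.mirror.n = I.n := rfl

theorem mirror_mirror : I.mirror.mirror = I := by
  refine ext_of_rel_iff rfl fun x y => ⟨fun h => ?_, fun h => ?_⟩ <;>
    simp only [mirror] at h ⊢
  · obtain ⟨hx1, hxn, hy1, hyn, -, -, -, -, h⟩ := h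
    rwa [show I.n + 1 - (I.n + 1 - x) = x by omega, show I.n + 1 - (I.n + 1 - y) = y by omega] at h
  · obtain ⟨hx1, hxn, hy1, hyn⟩ := I.supp h
    refine ⟨hx1, hxn, hy1, hyn, by omega, by omega, by omega, by omega, ?_⟩
    rwa [show I.n + 1 - (I.n + 1 - x) = x by omega, show I.n + 1 - (I.n + 1 - y) = y by omega]

def IsIncRoot (x : ℕ) : Prop :=
  1 ≤ x ∧ x ≤ I.n ∧ ∀ y, x < y → ¬ I.rel x y

noncomputable def itrees : ℕ := #{x ∈ Icc 1 I.n | IsIncRoot I x}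

noncomputable def decRoots : Finset ℕ := {x ∈ Icc 1 I.n | IsDecRoot I x}

variable {I}

theorem mem_decRoots {x : ℕ} : x ∈ I.decRoots ↔ IsDecRoot I x := by
  simp only [decRoots, mem_filter, mem_Icc, and_iff_right_iff_imp]
  exact fun h => ⟨h.1, h.2.1⟩

variable (I)

theorem trees_eq_card_decRoots : trees I = #I.decRoots := by
  rw [trees, ← Set.ncard_coe_finset]
  congr 1
  ext x
  simp [mem_decRoots]

theorem isDecRoot_mirror_iff {x : ℕ} (hx1 : 1 ≤ x) (hxn : x ≤ I.n) :
    IsDecRoot I.mirror x ↔ IsIncRoot I (I.n + 1 - x) := by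
  constructor
  · rintro ⟨-, -, hroot⟩
    refine ⟨by omega, by omega, fun y hy hrel => hroot (I.n + 1 - y) (by omega) ?_⟩
    obtain ⟨-, -, -, hyn⟩ := I.supp hrel
    exact ⟨hx1, hxn, by omega, by omega, by rwa [show I.n + 1 - (I.n + 1 - y) = y by omega]⟩
  · rintro ⟨-, -, hroot⟩
    exact ⟨hx1, hxn, fun y hy hrel => hroot (I.n + 1 - y) (by omega) hrel.2.2.2.2⟩

theorem trees_mirror : trees I.mirror = itrees I := by
  rw [trees_eq_card_decRoots, decRoots, itrees, mirror_n]
  refine card_nbij' (fun x => I.n + 1 - x) (fun x => I.n + 1 - x) ?_ ?_ ?_ ?_ <;>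
    simp only [coe_filter, mem_Icc, Set.MapsTo, Set.LeftInvOn, Set.mem_ofPred_eq]
  · rintro x ⟨hx, hroot⟩
    exact ⟨by omega, (isDecRoot_mirror_iff I hx.1 hx.2).1 hroot⟩
  · rintro x ⟨hx, hroot⟩
    refine ⟨by omega, (isDecRoot_mirror_iff I (by omega) (by omega)).2 ?_⟩
    rwa [show I.n + 1 - (I.n + 1 - x) = x by omega]
  · rintro x ⟨hx, -⟩; omega
  · rintro x ⟨hx, -⟩; omega

theorem itrees_mirror : itrees I.mirror = trees I := by
  rw [← trees_mirror, mirror_mirror]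

theorem exists_isDecRoot_rel {x : ℕ} (hx1 : 1 ≤ x) (hxn : x ≤ I.n) :
    ∃ s, IsDecRoot I s ∧ s ≤ x ∧ I.rel x s ∧ ∀ w, I.rel x w → s ≤ w := by
  have hex : ∃ w, I.rel x w := ⟨x, I.refl x hx1 hxn⟩
  have hspec := Nat.find_spec hex
  obtain ⟨-, -, hs1, hsn⟩ := I.supp hspec
  refine ⟨Nat.find hex, ⟨hs1, hsn, fun y hy hrel => ?_⟩, Nat.find_min' hex (I.refl x hx1 hxn),
    hspec, fun w hw => Nat.find_min' hex hw⟩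
  exact Nat.find_min hex hy (I.trans hspec hrel)

noncomputable def rootIndex (s : ℕ) : ℕ := Set.ncard {z | IsDecRoot I z ∧ z ≤ s}

theorem rootIndex_eq_card (s : ℕ) : rootIndex I s = #{z ∈ I.decRoots | z ≤ s} := by
  rw [rootIndex, ← Set.ncard_coe_finset]
  congr 1
  ext z
  simp [mem_decRoots]

theorem rootIndex_mono : Monotone (rootIndex I) := fun s s' h => by
  simp only [rootIndex_eq_card]
  exact card_le_card fun z hz => by
    simp only [mem_filter] at hz ⊢
    exact ⟨hz.1, hz.2.trans h⟩

def InFirstTrees (r x : ℕ) : Prop :=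
  ∃ s, IsDecRoot I s ∧ rootIndex I s ≤ r ∧ (x = s ∨ (s < x ∧ I.rel x s))

variable {I}

theorem inFirstTrees_iff_of_isDecRoot {r s : ℕ} (hs : IsDecRoot I s) :
    InFirstTrees I r s ↔ rootIndex I s ≤ r := by
  refine ⟨?_, fun h => ⟨s, hs, h, Or.inl rfl⟩⟩
  rintro ⟨u, -, hu, rfl | ⟨hlt, hrel⟩⟩
  exacts [hu, absurd hrel (hs.2.2 u hlt)]

theorem InFirstTrees.exists_rel {r w : ℕ} (h : InFirstTrees I r w) :
    ∃ s, rootIndex I s ≤ r ∧ s ≤ w ∧ I.rel w s := by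
  obtain ⟨s, hs, hidx, rfl | ⟨hlt, hrel⟩⟩ := h
  exacts [⟨w, hidx, le_rfl, I.refl w hs.1 hs.2.1⟩, ⟨s, hidx, hlt.le, hrel⟩]

theorem inFirstTrees_of_le_or_rel {r x s : ℕ} (hx1 : 1 ≤ x) (hxn : x ≤ I.n)
    (hs : rootIndex I s ≤ r) (hxs : x ≤ s ∨ I.rel x s) : InFirstTrees I r x := by
  obtain ⟨u, hu, hux, hxu, hmin⟩ := exists_isDecRoot_rel I hx1 hxn
  refine ⟨u, hu, (rootIndex_mono I (hxs.elim hux.trans (hmin s))).trans hs, ?_⟩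
  rcases hux.eq_or_lt with rfl | hlt
  exacts [Or.inl rfl, Or.inr ⟨hlt, hxu⟩]

theorem InFirstTrees.of_rel {r x w : ℕ} (hxw : I.rel x w) (h : InFirstTrees I r w) :
    InFirstTrees I r x := by
  obtain ⟨s, hidx, -, hws⟩ := h.exists_rel
  obtain ⟨hx1, hxn, -⟩ := I.supp hxw
  exact inFirstTrees_of_le_or_rel hx1 hxn hidx (Or.inr (I.trans hxw hws))

theorem InFirstTrees.of_lt {r b c : ℕ} (h : InFirstTrees I r c) (hb1 : 1 ≤ b) (hbc : b < c) :
    InFirstTrees I r b := by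
  obtain ⟨s, hidx, hsc, hcs⟩ := h.exists_rel
  obtain ⟨-, hcn, -⟩ := I.supp hcs
  rcases le_or_gt b s with hbs | hsb
  · exact inFirstTrees_of_le_or_rel hb1 (by omega) hidx (Or.inl hbs)
  · exact inFirstTrees_of_le_or_rel hb1 (by omega) hidx (Or.inr (I.dec hsb hbc hcs))

theorem card_filter_inFirstTrees {r : ℕ} (hr : r ≤ trees I) :
    #{s ∈ I.decRoots | InFirstTrees I r s} = r := by
  rw [trees_eq_card_decRoots] at hr
  refine (congrArg card (filter_congr fun s hs => ?_)).trans (card_filter_card_filter_le_le _ hr)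
  rw [inFirstTrees_iff_of_isDecRoot (mem_decRoots.1 hs), rootIndex_eq_card]

theorem card_filter_not_inFirstTrees {r : ℕ} (hr : r ≤ trees I) :
    #{s ∈ I.decRoots | ¬ InFirstTrees I r s} = trees I - r := by
  have hin := card_filter_inFirstTrees hr
  have hsplit := card_filter_add_card_filter_not (s := I.decRoots) (fun s => InFirstTrees I r s)
  rw [trees_eq_card_decRoots]
  omega

end

section
variable {I : IPoset}

theorem ir_le (I : IPoset) : ir I ≤ I.n := Nat.findGreatest_le _

theorem not_rel_of_le_ir {i : ℕ} (hi : 2 ≤ i) (hir : i ≤ ir I) : ¬ I.rel (i - 1) i :=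
  Nat.findGreatest_spec (P := fun k => ∀ i, 2 ≤ i → i ≤ k → ¬ I.rel (i - 1) i)
    (Nat.zero_le _) (fun i hi hi0 => by omega) i hi hir

theorem rel_ir_of_lt (h : ir I < I.n) : I.rel (ir I) (ir I + 1) := by
  by_contra hrel
  refine Nat.findGreatest_is_greatest (Nat.lt_succ_self (ir I)) h fun i hi hik => ?_
  rcases hik.eq_or_lt with rfl | hlt
  · simpa using hrel
  · exact not_rel_of_le_ir hi (by omega)

theorem ir_eq_of {k : ℕ} (hk : k ≤ I.n) (hno : ∀ i, 2 ≤ i → i ≤ k → ¬ I.rel (i - 1) i)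
    (hend : k = I.n ∨ I.rel k (k + 1)) : ir I = k := by
  refine Nat.findGreatest_eq_iff.2 ⟨hk, fun _ => hno, fun m hkm hmn hm => ?_⟩
  rcases hend with rfl | hrel
  · omega
  · exact hm (k + 1) (by have := (I.supp hrel).1; omega) hkm (by simpa using hrel)

noncomputable def contactCount (I : IPoset) (t o len : ℕ) : ℕ :=
  #{u ∈ (I.restrict o len).decRoots | I.rel (u + o) t}

theorem contactCount_le_trees (I : IPoset) (t o len : ℕ) :
    contactCount I t o len ≤ trees (I.restrict o len) := by
  rw [trees_eq_card_decRoots]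
  exact card_filter_le _ _

/-- Since `t ≤ o`, the axiom on decreasing relations makes `{u | u + o ≺ t}` downward closed,
so the vertices of `I.restrict o len` below `t` form its first few trees. -/
theorem rel_iff_inFirstTrees_contactCount {t o len x : ℕ} (ht : t ≤ o) (hlen : o + len ≤ I.n)
    (hx1 : 1 ≤ x) (hx : x ≤ len) :
    I.rel (x + o) t ↔ InFirstTrees (I.restrict o len) (contactCount I t o len) x := by
  set J := I.restrict o len
  have hdown : ∀ s ∈ J.decRoots, ∀ u ∈ {u ∈ J.decRoots | I.rel (u + o) t}, s ≤ u →
      s ∈ {u ∈ J.decRoots | I.rel (u + o) t} := by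
    intro s hs u hu hsu
    rw [mem_filter] at hu ⊢
    refine ⟨hs, ?_⟩
    rcases hsu.eq_or_lt with rfl | hlt
    · exact hu.2
    · exact I.dec (by have := (mem_decRoots.1 hs).1; omega) (by omega) hu.2
  have hroot : ∀ s, IsDecRoot J s →
      (I.rel (s + o) t ↔ rootIndex J s ≤ contactCount I t o len) := by
    intro s hs
    rw [rootIndex_eq_card, contactCount,
      ← mem_iff_card_filter_le_le_card (filter_subset _ _) hdown (mem_decRoots.2 hs), mem_filter]
    exact (and_iff_right (mem_decRoots.2 hs)).symm
  constructor
  · intro hrel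
    obtain ⟨s, hs, hsx, hxs, -⟩ :=
      exists_isDecRoot_rel J hx1 (by rw [restrict_n I hlen]; exact hx)
    rcases hsx.eq_or_lt with rfl | hlt
    · exact ⟨s, hs, (hroot s hs).1 hrel, Or.inl rfl⟩
    · exact ⟨s, hs, (hroot s hs).1 (I.dec (by have := hs.1; omega) (by omega) hrel),
        Or.inr ⟨hlt, hxs⟩⟩
  · rintro ⟨s, hs, hidx, rfl | ⟨-, hxs⟩⟩
    · exact (hroot x hs).2 hidx
    · exact I.trans hxs.2.2.2.2 ((hroot s hs).2 hidx)

def Dominates (I : IPoset) (y : ℕ) : Prop := ∀ x, 1 ≤ x → x < y → I.rel x y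

theorem Dominates.not_rel {c x y : ℕ} (hc : Dominates I c) (hx1 : 1 ≤ x) (hxc : x < c)
    (hcy : c ≤ y) : ¬ I.rel y x := fun hyx => by
  have hxrc := hc x hx1 hxc
  rcases hcy.eq_or_lt with rfl | hlt
  · exact hxc.ne (I.antisymm hxrc hyx)
  · exact hxc.ne (I.antisymm hxrc (I.dec hxc hlt hyx))

theorem Dominates.rel_iff {c x y : ℕ} (hc : Dominates I c) (hx1 : 1 ≤ x) (hxc : x < c)
    (hcy : c ≤ y) (hyn : y ≤ I.n) : I.rel x y ↔ I.rel c y := by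
  refine ⟨fun hxy => ?_, I.trans (hc x hx1 hxc)⟩
  rcases hcy.eq_or_lt with rfl | hlt
  · exact I.refl c (by omega) hyn
  · exact I.inc hxc hlt hxy

theorem dominates_of_rel {x y : ℕ} (hx : Dominates I x) (hxy : x < y) (hrel : I.rel x y) :
    Dominates I y := by
  intro z hz1 hzy
  rcases lt_trichotomy z x with hzx | rfl | hxz
  · exact I.trans (hx z hz1 hzx) hrel
  · exact hrel
  · exact I.inc hxz hzy hrel

theorem exists_firstDominator (I : IPoset) : ∃ c, 2 ≤ c ∧ (c ≤ I.n → Dominates I c) :=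
  ⟨I.n + 2, by omega, by omega⟩

/-- The least `c ≥ 2` that all smaller vertices precede; it is `I.n + 1` if there is none and
`0 < I.n`. -/
noncomputable def firstDominator (I : IPoset) : ℕ := Nat.find I.exists_firstDominator

noncomputable def lastDominator (I : IPoset) : ℕ := Nat.findGreatest (Dominates I) I.n

theorem two_le_firstDominator (I : IPoset) : 2 ≤ firstDominator I :=
  (Nat.find_spec I.exists_firstDominator).1

theorem firstDominator_le (h : 0 < I.n) : firstDominator I ≤ I.n + 1 :=
  Nat.find_min' _ ⟨by omega, by omega⟩

theorem dominates_firstDominator (h : firstDominator I ≤ I.n) : Dominates I (firstDominator I) :=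
  (Nat.find_spec I.exists_firstDominator).2 h

theorem not_rel_one_of_lt_firstDominator {y : ℕ} (hy2 : 2 ≤ y) (hy : y < firstDominator I) :
    ¬ I.rel 1 y := fun hrel =>
  Nat.find_min _ hy ⟨hy2, fun _ => dominates_of_rel (fun z hz1 hz => by omega) (by omega) hrel⟩

theorem one_le_lastDominator (h : 0 < I.n) : 1 ≤ lastDominator I :=
  Nat.le_findGreatest h fun x hx1 hx => by omega

theorem lastDominator_le (I : IPoset) : lastDominator I ≤ I.n := Nat.findGreatest_le _

theorem dominates_lastDominator (I : IPoset) : Dominates I (lastDominator I) :=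
  Nat.findGreatest_spec (Nat.zero_le _) fun x hx1 hx => by omega

theorem not_rel_lastDominator {y : ℕ} (hy : lastDominator I < y) (hyn : y ≤ I.n) :
    ¬ I.rel (lastDominator I) y := fun hrel =>
  Nat.findGreatest_is_greatest hy hyn (dominates_of_rel (dominates_lastDominator I) hy hrel)

end

/-- The relation of the composition that puts a new vertex `1` in front of `I₁` followed by
`I₂`: the first `r` trees of the final forest of `I₁` are placed below `1`, and `1` and all of
`I₁` precede whatever the first vertex of `I₂` precedes. -/
def riseRel (I1 I2 : IPoset) (r : ℕ) (x y : ℕ) : Prop :=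
  (x = 1 ∧ y = 1) ∨
  (2 ≤ x ∧ x ≤ I1.n + 1 ∧ 2 ≤ y ∧ y ≤ I1.n + 1 ∧ I1.rel (x - 1) (y - 1)) ∨
  (I1.n + 2 ≤ x ∧ I1.n + 2 ≤ y ∧ I2.rel (x - (I1.n + 1)) (y - (I1.n + 1))) ∨
  (y = 1 ∧ 2 ≤ x ∧ x ≤ I1.n + 1 ∧ InFirstTrees I1 r (x - 1)) ∨
  (1 ≤ x ∧ x ≤ I1.n + 1 ∧ I1.n + 2 ≤ y ∧ I2.rel 1 (y - (I1.n + 1)))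

def riseComp (I1 I2 : IPoset) (r : ℕ) : IPoset where
  n := I1.n + I2.n + 1
  rel := riseRel I1 I2 r
  supp a b h := by
    rcases h with h | ⟨-, -, -, -, h⟩ | ⟨-, -, h⟩ | h | ⟨h0, h1, h2, h'⟩
    · omega
    · have := I1.supp h; omega
    · have := I2.supp h; omega
    · omega
    · have := I2.supp h'; omega
  refl a h1 h2 := by
    rcases Nat.lt_or_ge a 2 with ha | ha
    · exact Or.inl (by omega)
    rcases Nat.lt_or_ge a (I1.n + 2) with hb | hb
    · exact Or.inr (Or.inl ⟨ha, by omega, ha, by omega, I1.refl _ (by omega) (by omega)⟩)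
    · exact Or.inr (Or.inr (Or.inl ⟨hb, hb, I2.refl _ (by omega) (by omega)⟩))
  antisymm a b h h' := by
    rcases h with h | ⟨h1, h2, h3, h4, h⟩ | ⟨h1, h2, h⟩ | h | ⟨h1, h2, h3, h⟩ <;>
    rcases h' with h' | ⟨g1, g2, g3, g4, h'⟩ | ⟨g1, g2, h'⟩ | h' | ⟨g1, g2, g3, h'⟩ <;>
    first
    | omega
    | have := I1.antisymm h h'; omega
    | have := I2.antisymm h h'; have := I2.supp h; omega
  trans a b c h h' := by
    rcases h with h | ⟨h1, h2, h3, h4, h⟩ | ⟨h1, h2, h⟩ | ⟨h1, h2, h3, h⟩ |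
      ⟨h1, h2, h3, h⟩ <;>
    rcases h' with h' | ⟨g1, g2, g3, g4, h'⟩ | ⟨g1, g2, h'⟩ | ⟨g1, g2, g3, h'⟩ |
      ⟨g1, g2, g3, h'⟩ <;>
    try omega
    · exact Or.inl (by omega)
    · exact Or.inr (Or.inr (Or.inr (Or.inr ⟨by omega, by omega, g3, h'⟩)))
    · exact Or.inr (Or.inl ⟨h1, h2, g3, g4, I1.trans h h'⟩)
    · exact Or.inr (Or.inr (Or.inr (Or.inl ⟨g1, h1, h2, h'.of_rel h⟩)))
    · exact Or.inr (Or.inr (Or.inr (Or.inr ⟨by omega, h2, g3, h'⟩)))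
    · exact Or.inr (Or.inr (Or.inl ⟨h1, g2, I2.trans h h'⟩))
    · exact Or.inr (Or.inr (Or.inr (Or.inl ⟨by omega, h2, h3, h⟩)))
    · exact Or.inr (Or.inr (Or.inr (Or.inr ⟨by omega, h3, g3, h'⟩)))
    · exact Or.inr (Or.inr (Or.inr (Or.inr ⟨h1, h2, g2, I2.trans h h'⟩)))
  inc a b c hab hbc h := by
    rcases h with h | ⟨h1, h2, h3, h4, h⟩ | ⟨h1, h2, h⟩ | ⟨h1, h2, h3, h⟩ |
      ⟨h1, h2, h3, h⟩
    · omega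
    · exact Or.inr (Or.inl ⟨by omega, by omega, by omega, h4, I1.inc (by omega) (by omega) h⟩)
    · have := I2.supp h
      exact Or.inr (Or.inr (Or.inl ⟨by omega, h2, I2.inc (by omega) (by omega) h⟩))
    · omega
    · rcases Nat.lt_or_ge b (I1.n + 2) with hb | hb
      · exact Or.inr (Or.inr (Or.inr (Or.inr ⟨by omega, by omega, h3, h⟩)))
      · refine Or.inr (Or.inr (Or.inl ⟨hb, by omega, ?_⟩))
        rcases hb.eq_or_lt with rfl | hlt
        · simpa using h
        · exact I2.inc (by omega) (by omega) h
  dec a b c hab hbc h := by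
    rcases h with h | ⟨h1, h2, h3, h4, h⟩ | ⟨h1, h2, h⟩ | ⟨h1, h2, h3, h⟩ |
      ⟨h1, h2, h3, h⟩
    · omega
    · exact Or.inr (Or.inl ⟨by omega, by omega, h3, h4, I1.dec (by omega) (by omega) h⟩)
    · exact Or.inr (Or.inr (Or.inl ⟨by omega, h2, I2.dec (by omega) (by omega) h⟩))
    · exact Or.inr (Or.inr (Or.inr (Or.inl
        ⟨h1, by omega, by omega, h.of_lt (by omega) (by omega)⟩)))
    · omega

def lcComp (I1 I2 : IPoset) (r : ℕ) : IPoset where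
  n := I1.n + I2.n + 1
  rel := LCrel I1 I2 r
  supp a b h := by
    rcases h with ⟨-, -, h⟩ | ⟨-, -, h⟩ | h | h | h
    · have := I1.supp h; omega
    · have := I2.supp h; omega
    all_goals omega
  refl a h1 h2 := by
    rcases lt_trichotomy a (I1.n + 1) with ha | rfl | ha
    · exact Or.inl ⟨by omega, by omega, I1.refl a h1 (by omega)⟩
    · exact Or.inr (Or.inr (Or.inl ⟨rfl, rfl⟩))
    · exact Or.inr (Or.inl ⟨ha, ha, I2.refl _ (by omega) (by omega)⟩)
  antisymm a b h h' := by
    rcases h with ⟨h1, h2, h⟩ | ⟨h1, h2, h⟩ | h | h | h <;>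
    rcases h' with ⟨g1, g2, h'⟩ | ⟨g1, g2, h'⟩ | h' | h' | h' <;>
    first
    | omega
    | exact I1.antisymm h h'
    | have := I2.antisymm h h'; have := I2.supp h; omega
  trans a b c h h' := by
    rcases h with ⟨h1, h2, h⟩ | ⟨h1, h2, h⟩ | h | ⟨h1, h2, h3⟩ | ⟨h1, h2, h3, h⟩ <;>
    rcases h' with ⟨g1, g2, h'⟩ | ⟨g1, g2, h'⟩ | h' | ⟨g1, g2, g3⟩ |
      ⟨g1, g2, g3, h'⟩ <;>
    try omega
    · exact Or.inl ⟨h1, g2, I1.trans h h'⟩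
    · exact Or.inr (Or.inr (Or.inr (Or.inl ⟨g1, (I1.supp h).1, h1⟩)))
    · exact Or.inr (Or.inl ⟨h1, g2, I2.trans h h'⟩)
    · have := I2.supp h
      exact Or.inr (Or.inr (Or.inr (Or.inr ⟨g1, h1, by omega, InFirstTrees.of_rel h h'⟩)))
    · exact Or.inr (Or.inr (Or.inl (by omega)))
    · exact Or.inr (Or.inr (Or.inr (Or.inl ⟨by omega, h2, h3⟩)))
    · exact Or.inr (Or.inr (Or.inr (Or.inr ⟨by omega, h2, h3, h⟩)))
  inc a b c hab hbc h := by
    rcases h with ⟨h1, h2, h⟩ | ⟨h1, h2, h⟩ | h | ⟨h1, h2, h3⟩ | ⟨h1, h2, h3, h⟩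
    · exact Or.inl ⟨by omega, h2, I1.inc hab hbc h⟩
    · exact Or.inr (Or.inl ⟨by omega, h2, I2.inc (by omega) (by omega) h⟩)
    · omega
    · exact Or.inr (Or.inr (Or.inr (Or.inl ⟨h1, by omega, by omega⟩)))
    · omega
  dec a b c hab hbc h := by
    rcases h with ⟨h1, h2, h⟩ | ⟨h1, h2, h⟩ | h | ⟨h1, h2, h3⟩ | ⟨h1, h2, h3, h⟩
    · exact Or.inl ⟨by omega, h2, I1.dec hab hbc h⟩
    · exact Or.inr (Or.inl ⟨by omega, h2, I2.dec (by omega) (by omega) h⟩)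
    · omega
    · omega
    · exact Or.inr (Or.inr (Or.inr (Or.inr
        ⟨h1, by omega, by omega, InFirstTrees.of_lt h (by omega) (by omega)⟩)))

section
variable {A B : IPoset} {r x : ℕ}

@[simp] theorem riseComp_n (A B : IPoset) (r : ℕ) : (riseComp A B r).n = A.n + B.n + 1 := rfl

@[simp] theorem lcComp_n (A B : IPoset) (r : ℕ) : (lcComp A B r).n = A.n + B.n + 1 := rfl

theorem ir_riseComp (A B : IPoset) (r : ℕ) : ir (riseComp A B r) = ir A + 1 := by
  have hle := ir_le A
  refine ir_eq_of (by simp only [riseComp_n]; omega) (fun i hi hir hrel => ?_) ?_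
  · rcases hrel with h | ⟨h1, -, -, -, h⟩ | h | h | h
    · omega
    · exact not_rel_of_le_ir h1 (by omega) h
    all_goals omega
  · rcases hle.lt_or_eq with hlt | heq
    · have hrise := rel_ir_of_lt hlt
      have := A.supp hrise
      exact Or.inr (Or.inr (Or.inl
        ⟨by omega, by omega, by omega, by omega, by simpa using hrise⟩))
    · rcases Nat.eq_zero_or_pos B.n with hB | hB
      · exact Or.inl (by simp only [riseComp_n]; omega)
      · refine Or.inr (Or.inr (Or.inr (Or.inr (Or.inr ⟨by omega, by omega, by omega, ?_⟩))))
        rw [show ir A + 1 + 1 - (A.n + 1) = 1 by omega]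
        exact B.refl 1 le_rfl hB

theorem riseComp_rel_one_iff (hx1 : 1 ≤ x) (hx : x ≤ A.n) :
    (riseComp A B r).rel (x + 1) 1 ↔ InFirstTrees A r x := by
  constructor
  · rintro (h | h | h | ⟨-, -, -, h⟩ | h)
    · omega
    · omega
    · omega
    · simpa using h
    · omega
  · exact fun h =>
      Or.inr (Or.inr (Or.inr (Or.inl ⟨rfl, by omega, by omega, by simpa using h⟩)))

theorem lcComp_rel_apex_iff (hx1 : 1 ≤ x) (hx : x ≤ B.n) :
    (lcComp A B r).rel (x + (A.n + 1)) (A.n + 1) ↔ InFirstTrees B r x := by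
  have e : x + (A.n + 1) - (A.n + 1) = x := Nat.add_sub_cancel _ _
  constructor
  · rintro (h | h | h | h | ⟨-, -, -, h⟩)
    · omega
    · omega
    · omega
    · omega
    · exact e ▸ h
  · exact fun h => Or.inr (Or.inr (Or.inr (Or.inr ⟨rfl, by omega, by omega, e.symm ▸ h⟩)))

theorem isDecRoot_riseComp_one : IsDecRoot (riseComp A B r) 1 :=
  ⟨le_rfl, by simp, fun y hy hrel => by have := (riseComp A B r).supp hrel; omega⟩

theorem isDecRoot_riseComp_left (hx1 : 1 ≤ x) (hx : x ≤ A.n) :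
    IsDecRoot (riseComp A B r) (x + 1) ↔ IsDecRoot A x ∧ ¬ InFirstTrees A r x := by
  constructor
  · rintro ⟨-, -, hroot⟩
    refine ⟨⟨hx1, hx, fun y hy hrel => hroot (y + 1) (by omega) ?_⟩,
      fun h => hroot 1 (by omega) ((riseComp_rel_one_iff hx1 hx).2 h)⟩
    have := A.supp hrel
    exact Or.inr (Or.inl ⟨by omega, by omega, by omega, by omega, by simpa using hrel⟩)
  · rintro ⟨⟨-, -, hroot⟩, hfirst⟩
    refine ⟨by omega, by simp only [riseComp_n]; omega, fun y hy hrel => ?_⟩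
    rcases hrel with h | ⟨-, -, -, -, h⟩ | h | ⟨-, -, -, h⟩ | h
    · omega
    · exact hroot (y - 1) (by omega) (by simpa using h)
    · omega
    · exact hfirst (by simpa using h)
    · omega

theorem isDecRoot_riseComp_right (hx1 : 1 ≤ x) (hx : x ≤ B.n) :
    IsDecRoot (riseComp A B r) (x + (A.n + 1)) ↔ IsDecRoot B x := by
  constructor
  · rintro ⟨-, -, hroot⟩
    refine ⟨hx1, hx, fun y hy hrel => hroot (y + (A.n + 1)) (by omega) ?_⟩
    have := B.supp hrel
    exact Or.inr (Or.inr (Or.inl ⟨by omega, by omega, by simpa using hrel⟩))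
  · rintro ⟨-, -, hroot⟩
    refine ⟨by omega, by simp only [riseComp_n]; omega, fun y hy hrel => ?_⟩
    rcases hrel with h | h | ⟨-, h2, h⟩ | h | h
    · omega
    · omega
    · exact hroot (y - (A.n + 1)) (by omega) (by simpa using h)
    · omega
    · omega

theorem trees_riseComp (hr : r ≤ trees A) :
    trees (riseComp A B r) = trees A - r + trees B + 1 := by
  have hone : #{x ∈ Icc 1 1 | IsDecRoot (riseComp A B r) x} = 1 := by
    rw [Icc_self, filter_singleton, if_pos isDecRoot_riseComp_one, card_singleton]
  have hleft : {x ∈ Icc 1 A.n | IsDecRoot (riseComp A B r) (x + 1)} =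
      {x ∈ A.decRoots | ¬ InFirstTrees A r x} := by
    rw [decRoots, filter_filter]
    exact filter_congr fun x hx => isDecRoot_riseComp_left (mem_Icc.1 hx).1 (mem_Icc.1 hx).2
  have hright : {x ∈ Icc 1 B.n | IsDecRoot (riseComp A B r) (x + A.n + 1)} = B.decRoots :=
    filter_congr fun x hx => isDecRoot_riseComp_right (mem_Icc.1 hx).1 (mem_Icc.1 hx).2
  rw [trees_eq_card_decRoots, decRoots, riseComp_n, add_comm _ 1, card_filter_Icc_one_add,
    card_filter_Icc_one_add, hone, hleft, hright, card_filter_not_inFirstTrees hr,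
    ← trees_eq_card_decRoots]
  omega

theorem isDecRoot_lcComp_left (hx1 : 1 ≤ x) (hx : x ≤ A.n) :
    IsDecRoot (lcComp A B r) x ↔ IsDecRoot A x := by
  constructor
  · rintro ⟨-, -, hroot⟩
    exact ⟨hx1, hx, fun y hy hrel => hroot y hy (Or.inl ⟨hx, by omega, hrel⟩)⟩
  · rintro ⟨-, -, hroot⟩
    refine ⟨hx1, by simp only [lcComp_n]; omega, fun y hy hrel => ?_⟩
    rcases hrel with ⟨-, -, h⟩ | h | h | h | h
    · exact hroot y hy h
    all_goals omega

theorem isDecRoot_lcComp_apex : IsDecRoot (lcComp A B r) (A.n + 1) := by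
  refine ⟨by omega, by simp only [lcComp_n]; omega, fun y hy hrel => ?_⟩
  rcases hrel with h | h | h | h | h <;> omega

theorem isDecRoot_lcComp_right (hx1 : 1 ≤ x) (hx : x ≤ B.n) :
    IsDecRoot (lcComp A B r) (x + (A.n + 1)) ↔ IsDecRoot B x ∧ ¬ InFirstTrees B r x := by
  constructor
  · rintro ⟨-, -, hroot⟩
    refine ⟨⟨hx1, hx, fun y hy hrel => hroot (y + (A.n + 1)) (by omega) ?_⟩,
      fun h => hroot (A.n + 1) (by omega) ((lcComp_rel_apex_iff hx1 hx).2 h)⟩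
    have := B.supp hrel
    exact Or.inr (Or.inl ⟨by omega, by omega, by simpa using hrel⟩)
  · rintro ⟨⟨-, -, hroot⟩, hfirst⟩
    refine ⟨by omega, by simp only [lcComp_n]; omega, fun y hy hrel => ?_⟩
    by_cases hyk : y = A.n + 1
    · exact hfirst ((lcComp_rel_apex_iff hx1 hx).1 (hyk ▸ hrel))
    rcases hrel with h | ⟨-, h2, h⟩ | h | h | h
    · omega
    · exact hroot (y - (A.n + 1)) (by omega) (by simpa using h)
    all_goals omega

theorem trees_lcComp (hr : r ≤ trees B) :
    trees (lcComp A B r) = trees A + (trees B - r) + 1 := by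
  have hleft : {x ∈ Icc 1 A.n | IsDecRoot (lcComp A B r) x} = A.decRoots :=
    filter_congr fun x hx => isDecRoot_lcComp_left (mem_Icc.1 hx).1 (mem_Icc.1 hx).2
  have hapex : #{x ∈ Icc 1 1 | IsDecRoot (lcComp A B r) (x + A.n)} = 1 := by
    rw [Icc_self, filter_singleton, add_comm, if_pos isDecRoot_lcComp_apex, card_singleton]
  have hright : {x ∈ Icc 1 B.n | IsDecRoot (lcComp A B r) (x + 1 + A.n)} =
      {x ∈ B.decRoots | ¬ InFirstTrees B r x} := by
    rw [decRoots, filter_filter]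
    refine filter_congr fun x hx => ?_
    rw [add_assoc, add_comm 1]
    exact isDecRoot_lcComp_right (mem_Icc.1 hx).1 (mem_Icc.1 hx).2
  rw [trees_eq_card_decRoots, decRoots, lcComp_n, add_assoc, add_comm B.n, card_filter_Icc_one_add,
    card_filter_Icc_one_add, hleft, hapex, hright, card_filter_not_inFirstTrees hr,
    ← trees_eq_card_decRoots]
  omega

theorem isIncRoot_lcComp_apex : IsIncRoot (lcComp A B r) (A.n + 1) := by
  refine ⟨by omega, by simp only [lcComp_n]; omega, fun y hy hrel => ?_⟩
  rcases hrel with h | h | h | h | h <;> omega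

theorem isIncRoot_lcComp_right (hx1 : 1 ≤ x) (hx : x ≤ B.n) :
    IsIncRoot (lcComp A B r) (x + (A.n + 1)) ↔ IsIncRoot B x := by
  constructor
  · rintro ⟨-, -, hroot⟩
    refine ⟨hx1, hx, fun y hy hrel => hroot (y + (A.n + 1)) (by omega) ?_⟩
    have := B.supp hrel
    exact Or.inr (Or.inl ⟨by omega, by omega, by simpa using hrel⟩)
  · rintro ⟨-, -, hroot⟩
    refine ⟨by omega, by simp only [lcComp_n]; omega, fun y hy hrel => ?_⟩
    rcases hrel with h | ⟨-, h2, h⟩ | h | h | h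
    · omega
    · exact hroot (y - (A.n + 1)) (by omega) (by simpa using h)
    all_goals omega

theorem itrees_lcComp (A B : IPoset) (r : ℕ) : itrees (lcComp A B r) = itrees B + 1 := by
  have hleft : {x ∈ Icc 1 A.n | IsIncRoot (lcComp A B r) x} = ∅ :=
    filter_false_of_mem fun x hx hroot =>
      hroot.2.2 (A.n + 1) (by have := mem_Icc.1 hx; omega)
        (Or.inr (Or.inr (Or.inr (Or.inl ⟨rfl, (mem_Icc.1 hx).1, (mem_Icc.1 hx).2⟩))))
  have hapex : #{x ∈ Icc 1 1 | IsIncRoot (lcComp A B r) (x + A.n)} = 1 := by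
    rw [Icc_self, filter_singleton, add_comm, if_pos isIncRoot_lcComp_apex, card_singleton]
  have hright : {x ∈ Icc 1 B.n | IsIncRoot (lcComp A B r) (x + 1 + A.n)} =
      {x ∈ Icc 1 B.n | IsIncRoot B x} := by
    refine filter_congr fun x hx => ?_
    rw [add_assoc, add_comm 1]
    exact isIncRoot_lcComp_right (mem_Icc.1 hx).1 (mem_Icc.1 hx).2
  rw [itrees, itrees, lcComp_n, add_assoc, add_comm B.n, card_filter_Icc_one_add,
    card_filter_Icc_one_add, hleft, hapex, hright, card_empty]
  omega

end

section
variable {I : IPoset}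

theorem restrict_rel_sub_iff {o len x y : ℕ} (hx : o < x) (hy : o < y) :
    (I.restrict o len).rel (x - o) (y - o) ↔ x ≤ o + len ∧ y ≤ o + len ∧ I.rel x y := by
  show (1 ≤ x - o ∧ x - o ≤ len ∧ 1 ≤ y - o ∧ y - o ≤ len ∧
    I.rel (x - o + o) (y - o + o)) ↔ _
  rw [Nat.sub_add_cancel hx.le, Nat.sub_add_cancel hy.le]
  exact ⟨fun ⟨_, hxl, _, hyl, h⟩ => ⟨by omega, by omega, h⟩,
    fun ⟨hxl, hyl, h⟩ => ⟨by omega, by omega, by omega, by omega, h⟩⟩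

noncomputable def riseLeft (I : IPoset) : IPoset := I.restrict 1 (firstDominator I - 2)

noncomputable def riseRight (I : IPoset) : IPoset :=
  I.restrict (firstDominator I - 1) (I.n + 1 - firstDominator I)

noncomputable def riseIndex (I : IPoset) : ℕ := contactCount I 1 1 (firstDominator I - 2)

theorem riseLeft_n (h : 0 < I.n) : (riseLeft I).n = firstDominator I - 2 :=
  restrict_n I (by have := firstDominator_le h; have := two_le_firstDominator I; omega)

theorem riseRight_n (h : 0 < I.n) : (riseRight I).n = I.n + 1 - firstDominator I :=
  restrict_n I (by have := firstDominator_le h; have := two_le_firstDominator I; omega)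

theorem riseIndex_le_trees (I : IPoset) : riseIndex I ≤ trees (riseLeft I) :=
  contactCount_le_trees I 1 1 _

theorem riseComp_riseLeft_riseRight (h : 0 < I.n) :
    riseComp (riseLeft I) (riseRight I) (riseIndex I) = I := by
  have hc2 := two_le_firstDominator I
  have hcn := firstDominator_le h
  have hdom : firstDominator I ≤ I.n → Dominates I (firstDominator I) :=
    dominates_firstDominator
  have hone := @not_rel_one_of_lt_firstDominator I
  unfold riseLeft riseRight riseIndex
  generalize firstDominator I = c at *
  have hbelow : ∀ x, 2 ≤ x → x < c →
      (I.rel x 1 ↔ InFirstTrees (I.restrict 1 (c - 2)) (contactCount I 1 1 (c - 2)) (x - 1)) :=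
    fun x hx2 hxc => by
      rw [← rel_iff_inFirstTrees_contactCount le_rfl (by omega) (by omega) (by omega),
        Nat.sub_add_cancel (by omega : 1 ≤ x)]
  have hL : (I.restrict 1 (c - 2)).n = c - 2 := restrict_n I (by omega)
  have hR : (I.restrict (c - 1) (I.n + 1 - c)).n = I.n + 1 - c := restrict_n I (by omega)
  refine ext_of_rel_iff (by rw [riseComp_n, hL, hR]; omega) fun x y => ?_
  simp only [riseComp, riseRel, hL, show c - 2 + 1 = c - 1 by omega, show c - 2 + 2 = c by omega]
  constructor
  · rintro (⟨rfl, rfl⟩ | ⟨h1, -, h3, -, hxy⟩ | ⟨h1, h2, hxy⟩ | ⟨rfl, h1, h2, hx⟩ |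
      ⟨h1, h2, h3, hcy⟩)
    · exact I.refl 1 le_rfl h
    · exact ((restrict_rel_sub_iff (by omega) (by omega)).1 hxy).2.2
    · exact ((restrict_rel_sub_iff (by omega) (by omega)).1 hxy).2.2
    · exact (hbelow x h1 (by omega)).2 hx
    · obtain ⟨-, hyn, hcy⟩ := (restrict_rel_sub_iff (o := c - 1) (x := c) (y := y)
        (by omega) (by omega)).1 (by rwa [Nat.sub_sub_self (by omega : 1 ≤ c)])
      exact ((hdom (by omega)).rel_iff h1 (by omega) h3 (by omega)).2 hcy
  · intro hxy
    obtain ⟨hx1, hxn, hy1, hyn⟩ := I.supp hxy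
    rcases Nat.lt_or_ge x c with hxc | hxc <;> rcases Nat.lt_or_ge y c with hyc | hyc
    · rcases hy1.eq_or_lt with rfl | hy2
      · rcases hx1.eq_or_lt with rfl | hx2
        · exact Or.inl ⟨rfl, rfl⟩
        · exact Or.inr (Or.inr (Or.inr (Or.inl
            ⟨rfl, hx2, by omega, (hbelow x hx2 hxc).1 hxy⟩)))
      · rcases hx1.eq_or_lt with rfl | hx2
        · exact absurd hxy (hone hy2 hyc)
        · exact Or.inr (Or.inl ⟨hx2, by omega, hy2, by omega,
            (restrict_rel_sub_iff hx2 hy2).2 ⟨by omega, by omega, hxy⟩⟩)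
    · refine Or.inr (Or.inr (Or.inr (Or.inr ⟨hx1, by omega, hyc, ?_⟩)))
      have := (restrict_rel_sub_iff (o := c - 1) (len := I.n + 1 - c) (x := c) (y := y)
        (by omega) (by omega)).2
        ⟨by omega, by omega, ((hdom (by omega)).rel_iff hx1 hxc hyc hyn).1 hxy⟩
      rwa [Nat.sub_sub_self (by omega : 1 ≤ c)] at this
    · exact absurd hxy ((hdom (by omega)).not_rel hy1 hyc hxc)
    · exact Or.inr (Or.inr (Or.inl ⟨hxc, hyc,
        (restrict_rel_sub_iff (by omega) (by omega)).2 ⟨by omega, by omega, hxy⟩⟩))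

theorem restrict_zero_rel_iff {len x y : ℕ} :
    (I.restrict 0 len).rel x y ↔ 1 ≤ x ∧ x ≤ len ∧ 1 ≤ y ∧ y ≤ len ∧ I.rel x y :=
  Iff.rfl

noncomputable def lcLeft (I : IPoset) : IPoset := I.restrict 0 (lastDominator I - 1)

noncomputable def lcRight (I : IPoset) : IPoset :=
  I.restrict (lastDominator I) (I.n - lastDominator I)

noncomputable def lcIndex (I : IPoset) : ℕ :=
  contactCount I (lastDominator I) (lastDominator I) (I.n - lastDominator I)

theorem lcLeft_n (h : 0 < I.n) : (lcLeft I).n = lastDominator I - 1 :=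
  restrict_n I (by have := lastDominator_le I; have := one_le_lastDominator h; omega)

theorem lcRight_n (h : 0 < I.n) : (lcRight I).n = I.n - lastDominator I :=
  restrict_n I (by have := lastDominator_le I; have := one_le_lastDominator h; omega)

theorem lcIndex_le_trees (I : IPoset) : lcIndex I ≤ trees (lcRight I) :=
  contactCount_le_trees I _ _ _

theorem lcComp_lcLeft_lcRight (h : 0 < I.n) : lcComp (lcLeft I) (lcRight I) (lcIndex I) = I := by
  have hk1 := one_le_lastDominator h
  have hkn := lastDominator_le I
  have hdom := dominates_lastDominator I
  have habove := @not_rel_lastDominator I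
  unfold lcLeft lcRight lcIndex
  generalize lastDominator I = k at *
  have hbelow : ∀ x, k < x → x ≤ I.n → (I.rel x k ↔
      InFirstTrees (I.restrict k (I.n - k)) (contactCount I k k (I.n - k)) (x - k)) :=
    fun x hkx hxn => by
      rw [← rel_iff_inFirstTrees_contactCount le_rfl (by omega) (by omega) (by omega),
        Nat.sub_add_cancel hkx.le]
  have hL : (I.restrict 0 (k - 1)).n = k - 1 := restrict_n I (by omega)
  have hR : (I.restrict k (I.n - k)).n = I.n - k := restrict_n I (by omega)
  refine ext_of_rel_iff (by rw [lcComp_n, hL, hR]; omega) fun x y => ?_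
  simp only [lcComp, LCrel, hL, hR, restrict_zero_rel_iff, show k - 1 + 1 = k by omega]
  constructor
  · rintro (⟨-, -, -, -, -, -, hxy⟩ | ⟨h1, h2, hxy⟩ | ⟨rfl, rfl⟩ | ⟨rfl, h1, h2⟩ |
      ⟨rfl, h1, h2, hx⟩)
    · exact hxy
    · exact ((restrict_rel_sub_iff h1 h2).1 hxy).2.2
    · exact I.refl _ hk1 hkn
    · exact hdom x h1 (by omega)
    · exact (hbelow x h1 (by omega)).2 hx
  · intro hxy
    obtain ⟨hx1, hxn, hy1, hyn⟩ := I.supp hxy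
    rcases lt_trichotomy x k with hxk | hxk | hkx <;>
      rcases lt_trichotomy y k with hyk | hyk | hky
    · exact Or.inl ⟨by omega, by omega, hx1, by omega, hy1, by omega, hxy⟩
    · exact Or.inr (Or.inr (Or.inr (Or.inl ⟨hyk, hx1, by omega⟩)))
    · exact absurd ((hdom.rel_iff hx1 hxk hky.le hyn).1 hxy) (habove hky hyn)
    · exact absurd hxy (hdom.not_rel hy1 hyk hxk.ge)
    · exact Or.inr (Or.inr (Or.inl ⟨hxk, hyk⟩))
    · exact absurd (hxk ▸ hxy) (habove hky hyn)
    · exact absurd hxy (hdom.not_rel hy1 hyk hkx.le)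
    · exact Or.inr (Or.inr (Or.inr (Or.inr
        ⟨hyk, hkx, by omega, (hbelow x hkx hxn).1 (hyk ▸ hxy)⟩)))
    · exact Or.inr (Or.inl
        ⟨hkx, hky, (restrict_rel_sub_iff hkx hky).2 ⟨by omega, by omega, hxy⟩⟩)

end

section
variable {A B : IPoset} {r : ℕ}

theorem firstDominator_riseComp : firstDominator (riseComp A B r) = A.n + 2 := by
  refine (Nat.find_eq_iff _).2
    ⟨⟨by omega, fun hn x hx1 hx => ?_⟩, fun m hm ⟨hm2, hdom⟩ => ?_⟩
  · refine Or.inr (Or.inr (Or.inr (Or.inr ⟨hx1, by omega, le_rfl, ?_⟩)))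
    rw [show A.n + 2 - (A.n + 1) = 1 by omega]
    exact B.refl 1 le_rfl (by simp only [riseComp_n] at hn; omega)
  · rcases hdom (by simp only [riseComp_n]; omega) 1 le_rfl (by omega) with h | h | h | h | h <;>
      omega

theorem restrict_riseComp_left : (riseComp A B r).restrict 1 A.n = A := by
  refine ext_of_rel_iff (restrict_n _ (by simp only [riseComp_n]; omega)) fun a b => ?_
  refine ⟨fun ⟨ha1, ha, hb1, hb, hab⟩ => ?_, fun hab => ?_⟩
  · rcases hab with h | ⟨-, -, -, -, h⟩ | h | h | h
    · omega
    · simpa using h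
    all_goals omega
  · obtain ⟨ha1, ha, hb1, hb⟩ := A.supp hab
    exact ⟨ha1, ha, hb1, hb,
      Or.inr (Or.inl ⟨by omega, by omega, by omega, by omega, by simpa using hab⟩)⟩

theorem restrict_riseComp_right : (riseComp A B r).restrict (A.n + 1) B.n = B := by
  refine ext_of_rel_iff (restrict_n _ (by simp only [riseComp_n]; omega)) fun a b => ?_
  refine ⟨fun ⟨ha1, ha, hb1, hb, hab⟩ => ?_, fun hab => ?_⟩
  · rcases hab with h | h | ⟨-, -, h⟩ | h | h
    · omega
    · omega
    · simpa using h
    all_goals omega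
  · obtain ⟨ha1, ha, hb1, hb⟩ := B.supp hab
    exact ⟨ha1, ha, hb1, hb,
      Or.inr (Or.inr (Or.inl ⟨by omega, by omega, by simpa using hab⟩))⟩

theorem riseLeft_riseComp : riseLeft (riseComp A B r) = A := by
  rw [riseLeft, firstDominator_riseComp, Nat.add_sub_cancel]
  exact restrict_riseComp_left

theorem riseRight_riseComp : riseRight (riseComp A B r) = B := by
  rw [riseRight, firstDominator_riseComp, riseComp_n, show A.n + 2 - 1 = A.n + 1 by omega,
    show A.n + B.n + 1 + 1 - (A.n + 2) = B.n by omega]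
  exact restrict_riseComp_right

theorem riseIndex_riseComp (hr : r ≤ trees A) : riseIndex (riseComp A B r) = r := by
  rw [riseIndex, contactCount, firstDominator_riseComp, Nat.add_sub_cancel, restrict_riseComp_left]
  refine (congrArg card (filter_congr fun u hu => ?_)).trans (card_filter_inFirstTrees hr)
  exact riseComp_rel_one_iff (mem_decRoots.1 hu).1 (mem_decRoots.1 hu).2.1

theorem lastDominator_lcComp : lastDominator (lcComp A B r) = A.n + 1 := by
  refine Nat.findGreatest_eq_iff.2 ⟨by simp only [lcComp_n]; omega, fun _ x hx1 hx => ?_,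
    fun m hm hmn hdom => ?_⟩
  · exact Or.inr (Or.inr (Or.inr (Or.inl ⟨rfl, hx1, by omega⟩)))
  · rcases hdom (A.n + 1) (by omega) hm with h | h | h | h | h <;> omega

theorem restrict_lcComp_left : (lcComp A B r).restrict 0 A.n = A := by
  refine ext_of_rel_iff (restrict_n _ (by simp only [lcComp_n]; omega)) fun a b => ?_
  rw [restrict_zero_rel_iff]
  refine ⟨fun ⟨ha1, ha, hb1, hb, hab⟩ => ?_, fun hab => ?_⟩
  · rcases hab with ⟨-, -, h⟩ | h | h | h | h
    · exact h
    all_goals omega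
  · obtain ⟨ha1, ha, hb1, hb⟩ := A.supp hab
    exact ⟨ha1, ha, hb1, hb, Or.inl ⟨ha, hb, hab⟩⟩

theorem restrict_lcComp_right : (lcComp A B r).restrict (A.n + 1) B.n = B := by
  refine ext_of_rel_iff (restrict_n _ (by simp only [lcComp_n]; omega)) fun a b => ?_
  refine ⟨fun ⟨ha1, ha, hb1, hb, hab⟩ => ?_, fun hab => ?_⟩
  · rcases hab with h | ⟨-, -, h⟩ | h | h | h
    · omega
    · simpa using h
    all_goals omega
  · obtain ⟨ha1, ha, hb1, hb⟩ := B.supp hab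
    exact ⟨ha1, ha, hb1, hb, Or.inr (Or.inl ⟨by omega, by omega, by simpa using hab⟩)⟩

theorem lcLeft_lcComp : lcLeft (lcComp A B r) = A := by
  rw [lcLeft, lastDominator_lcComp, Nat.add_sub_cancel]
  exact restrict_lcComp_left

theorem lcRight_lcComp : lcRight (lcComp A B r) = B := by
  rw [lcRight, lastDominator_lcComp, lcComp_n, show A.n + B.n + 1 - (A.n + 1) = B.n by omega]
  exact restrict_lcComp_right

theorem lcIndex_lcComp (hr : r ≤ trees B) : lcIndex (lcComp A B r) = r := by
  rw [lcIndex, contactCount, lastDominator_lcComp, lcComp_n,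
    show A.n + B.n + 1 - (A.n + 1) = B.n by omega, restrict_lcComp_right]
  refine (congrArg card (filter_congr fun u hu => ?_)).trans (card_filter_inFirstTrees hr)
  exact lcComp_rel_apex_iff (mem_decRoots.1 hu).1 (mem_decRoots.1 hu).2.1

end

section
variable {I J : IPoset}

theorem riseLeft_n_lt (h : 0 < I.n) : (riseLeft I).n < I.n := by
  rw [riseLeft_n h]; have := firstDominator_le h; omega

theorem riseRight_n_lt (h : 0 < I.n) : (riseRight I).n < I.n := by
  rw [riseRight_n h]; have := two_le_firstDominator I; omega

theorem lcLeft_n_lt (h : 0 < I.n) : (lcLeft I).n < I.n := by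
  rw [lcLeft_n h]; have := lastDominator_le I; have := one_le_lastDominator h; omega

theorem lcRight_n_lt (h : 0 < I.n) : (lcRight I).n < I.n := by
  rw [lcRight_n h]; have := one_le_lastDominator h; omega

noncomputable def toLC (I : IPoset) : IPoset :=
  if I.n = 0 then I else lcComp (toLC (riseRight I)) (toLC (riseLeft I)) (riseIndex I)
termination_by I.n
decreasing_by
  · exact riseRight_n_lt (by omega)
  · exact riseLeft_n_lt (by omega)

noncomputable def ofLC (J : IPoset) : IPoset :=
  if J.n = 0 then J else riseComp (ofLC (lcRight J)) (ofLC (lcLeft J)) (lcIndex J)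
termination_by J.n
decreasing_by
  · exact lcRight_n_lt (by omega)
  · exact lcLeft_n_lt (by omega)

theorem toLC_of_n_eq_zero (h : I.n = 0) : toLC I = I := by rw [toLC, if_pos h]

theorem toLC_of_pos (h : 0 < I.n) :
    toLC I = lcComp (toLC (riseRight I)) (toLC (riseLeft I)) (riseIndex I) := by
  rw [toLC, if_neg h.ne']

theorem ofLC_of_n_eq_zero (h : J.n = 0) : ofLC J = J := by rw [ofLC, if_pos h]

theorem ofLC_of_pos (h : 0 < J.n) :
    ofLC J = riseComp (ofLC (lcRight J)) (ofLC (lcLeft J)) (lcIndex J) := by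
  rw [ofLC, if_neg h.ne']

theorem riseLeft_n_add_riseRight_n (h : 0 < I.n) : (riseLeft I).n + (riseRight I).n + 1 = I.n :=
  congrArg IPoset.n (riseComp_riseLeft_riseRight h)

theorem toLC_n (I : IPoset) : (toLC I).n = I.n := by
  rcases Nat.eq_zero_or_pos I.n with h | h
  · rw [toLC_of_n_eq_zero h]
  · rw [toLC_of_pos h, lcComp_n, toLC_n, toLC_n, ← riseLeft_n_add_riseRight_n h]
    omega
termination_by I.n
decreasing_by
  · exact riseRight_n_lt h
  · exact riseLeft_n_lt h

theorem trees_toLC (I : IPoset) : trees (toLC I) = trees I := by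
  rcases Nat.eq_zero_or_pos I.n with h | h
  · rw [toLC_of_n_eq_zero h]
  · have hr := riseIndex_le_trees I
    rw [toLC_of_pos h, trees_lcComp (by rwa [trees_toLC]), trees_toLC, trees_toLC]
    conv_rhs => rw [← riseComp_riseLeft_riseRight h, trees_riseComp hr]
    omega
termination_by I.n
decreasing_by
  · exact riseLeft_n_lt h
  · exact riseRight_n_lt h

theorem itrees_toLC (I : IPoset) : itrees (toLC I) = ir I := by
  rcases Nat.eq_zero_or_pos I.n with h | h
  · have hir : ir I = 0 := by have := ir_le I; omega
    rw [toLC_of_n_eq_zero h, hir, itrees, h]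
    simp
  · rw [toLC_of_pos h, itrees_lcComp, itrees_toLC]
    conv_rhs => rw [← riseComp_riseLeft_riseRight h, ir_riseComp]
termination_by I.n
decreasing_by exact riseLeft_n_lt h

theorem trees_ofLC (J : IPoset) : trees (ofLC J) = trees J := by
  rcases Nat.eq_zero_or_pos J.n with h | h
  · rw [ofLC_of_n_eq_zero h]
  · have hr := lcIndex_le_trees J
    rw [ofLC_of_pos h, trees_riseComp (by rwa [trees_ofLC]), trees_ofLC, trees_ofLC]
    conv_rhs => rw [← lcComp_lcLeft_lcRight h, trees_lcComp hr]
    omega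
termination_by J.n
decreasing_by
  · exact lcRight_n_lt h
  · exact lcLeft_n_lt h

theorem toLC_riseComp {A B : IPoset} {r : ℕ} (hr : r ≤ trees A) :
    toLC (riseComp A B r) = lcComp (toLC B) (toLC A) r := by
  rw [toLC_of_pos (by simp), riseLeft_riseComp, riseRight_riseComp, riseIndex_riseComp hr]

theorem ofLC_lcComp {A B : IPoset} {r : ℕ} (hr : r ≤ trees B) :
    ofLC (lcComp A B r) = riseComp (ofLC B) (ofLC A) r := by
  rw [ofLC_of_pos (by simp), lcLeft_lcComp, lcRight_lcComp, lcIndex_lcComp hr]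

theorem ofLC_toLC (I : IPoset) : ofLC (toLC I) = I := by
  rcases Nat.eq_zero_or_pos I.n with h | h
  · rw [toLC_of_n_eq_zero h, ofLC_of_n_eq_zero h]
  · rw [toLC_of_pos h, ofLC_lcComp (by rw [trees_toLC]; exact riseIndex_le_trees I), ofLC_toLC,
      ofLC_toLC, riseComp_riseLeft_riseRight h]
termination_by I.n
decreasing_by
  · exact riseLeft_n_lt h
  · exact riseRight_n_lt h

theorem toLC_ofLC (J : IPoset) : toLC (ofLC J) = J := by
  rcases Nat.eq_zero_or_pos J.n with h | h
  · rw [ofLC_of_n_eq_zero h, toLC_of_n_eq_zero h]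
  · rw [ofLC_of_pos h, toLC_riseComp (by rw [trees_ofLC]; exact lcIndex_le_trees J), toLC_ofLC,
      toLC_ofLC, lcComp_lcLeft_lcRight h]
termination_by J.n
decreasing_by
  · exact lcLeft_n_lt h
  · exact lcRight_n_lt h

theorem ofLC_n (J : IPoset) : (ofLC J).n = J.n := by
  rw [← toLC_n, toLC_ofLC]

theorem ir_ofLC (J : IPoset) : ir (ofLC J) = itrees J := by
  rw [← itrees_toLC, toLC_ofLC]

noncomputable def riseContact (I : IPoset) : IPoset := ofLC (toLC I).mirror

theorem riseContact_n (I : IPoset) : (riseContact I).n = I.n := by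
  rw [riseContact, ofLC_n, mirror_n, toLC_n]

theorem trees_riseContact (I : IPoset) : trees (riseContact I) = ir I := by
  rw [riseContact, trees_ofLC, trees_mirror, itrees_toLC]

theorem ir_riseContact (I : IPoset) : ir (riseContact I) = trees I := by
  rw [riseContact, ir_ofLC, itrees_mirror, trees_toLC]

theorem riseContact_involutive : Function.Involutive riseContact := fun I => by
  rw [riseContact, riseContact, toLC_ofLC, mirror_mirror, ofLC_toLC]

end

end IPoset

/-- The joint distribution of `(trees, ir)` on interval-posets is symmetric:
for all `n, a, b`, the number of interval-posets of size `n` with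
`trees I = a` and `ir I = b` equals the number with `trees I = b` and
`ir I = a`. -/
theorem trees_ir_symmetric_distribution (n a b : ℕ) :
    Nat.card {I : IPoset // I.n = n ∧ trees I = a ∧ ir I = b} =
      Nat.card {I : IPoset // I.n = n ∧ trees I = b ∧ ir I = a} :=
  Nat.card_congr <| IPoset.riseContact_involutive.toPerm.subtypeEquiv fun I => by
    rw [Function.Involutive.coe_toPerm, IPoset.riseContact_n, IPoset.trees_riseContact,
      IPoset.ir_riseContact]
    tauto
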